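/- Let G be a connected graph on n vertices with diameter at least 3 and maximum vertex transmission D_1. Then the distance Laplacian spectral radius satisfies ∂_1^L(G) > D_1 + 2 (strict inequality). -/

import Mathlib

open Finset Matrix Polynomial SimpleGraph

variable {V : Type*} [Fintype V] [DecidableEq V]

/-- The distance matrix of a graph: entries are graph distances (as reals). -/
noncomputable def distMatrix (G : SimpleGraph V) : Matrix V V ℝ :=
  fun i j => (G.dist i j : ℝ)

/-- The transmission of a vertex: sum of distances to all vertices. -/
noncomputable def transmission (G : SimpleGraph V) (i : V) : ℝ :=
  ∑ j, (G.dist i j : ℝ)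

/-- The distance Laplacian matrix `L(G) = Tr(G) - D(G)`. -/
noncomputable def distLaplacian (G : SimpleGraph V) : Matrix V V ℝ :=
  Matrix.diagonal (transmission G) - distMatrix G

/-- The distance signless Laplacian matrix `Q(G) = Tr(G) + D(G)`. -/
noncomputable def distSignlessLaplacian (G : SimpleGraph V) : Matrix V V ℝ :=
  Matrix.diagonal (transmission G) + distMatrix G

/-- `μ` is an eigenvalue of the matrix `A`. -/
def IsEigOf (A : Matrix V V ℝ) (μ : ℝ) : Prop :=
  ∃ x : V → ℝ, x ≠ 0 ∧ A.mulVec x = μ • x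

/-- Largest eigenvalue (spectral radius for our PSD matrices). -/
noncomputable def maxEig (A : Matrix V V ℝ) : ℝ := sSup {μ : ℝ | IsEigOf A μ}

/-- Smallest eigenvalue. -/
noncomputable def minEig (A : Matrix V V ℝ) : ℝ := sInf {μ : ℝ | IsEigOf A μ}

/-- The Wiener index: half the sum of all pairwise distances. -/
noncomputable def wienerIndex (G : SimpleGraph V) : ℝ :=
  (1 / 2) * ∑ i, ∑ j, (G.dist i j : ℝ)

/-!
Fix any vertex `u`, let `w v = d(u,v) - 1` for `v ≠ u` and `w u = 0`, and test the distance
Laplacian on the vector `x` with `x u = ∑ w` and `x v = -w v` otherwise, which is orthogonal to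
the all-ones vector. Splitting the distance matrix as `J + (D - J)`, the quadratic form is
`n ‖x‖² + ½ ∑ᵢⱼ (d(i,j) - 1)(xᵢ - xⱼ)²`, and expanding gives
`xᵀ L x - (D_u + 2) ‖x‖² = ∑ᵥ (∑ w + w v) w v (w v - 1) + ½ ∑_{i,j ≠ u} (d(i,j) - 1)(w i - w j)²`.
All terms are nonnegative because the `w v` are natural numbers. Diameter at least three makes one
of them positive: either some vertex is at distance at least three from `u` (so some `w v ≥ 2`),
or some vertex at distance two from `u` is at distance at least two from a neighbour of `u`.
So the Rayleigh quotient of `x` exceeds `D_u + 2` for every vertex `u`.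
-/

lemma dotProduct_self_nonneg {n : Type*} [Fintype n] (v : n → ℝ) : 0 ≤ v ⬝ᵥ v := by
  simpa using dotProduct_star_self_nonneg v

lemma dotProduct_self_pos {n : Type*} [Fintype n] {v : n → ℝ} (hv : v ≠ 0) : 0 < v ⬝ᵥ v :=
  (dotProduct_self_nonneg v).lt_of_ne (Ne.symm (mt dotProduct_self_eq_zero.mp hv))

lemma natCast_mul_natCast_sub_one_nonneg {R : Type*} [Ring R] [LinearOrder R]
    [IsStrictOrderedRing R] (k : ℕ) : 0 ≤ (k : R) * (k - 1) := by
  rcases k with _ | k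
  · simp
  · push_cast
    rw [add_sub_cancel_right]
    positivity

namespace Fintype

variable {ι R : Type*} [Fintype ι]

lemma sum_sum_sub_sq [CommRing R] (x : ι → R) :
    ∑ i, ∑ j, (x i - x j) ^ 2 = 2 * (card ι * (x ⬝ᵥ x) - (∑ i, x i) ^ 2) := by
  simp only [dotProduct, ← sq, sub_sq, Finset.sum_add_distrib, Finset.sum_sub_distrib,
    Finset.sum_const, Finset.card_univ, nsmul_eq_mul, ← Finset.mul_sum, ← Finset.sum_mul,
    mul_assoc]
  ring

lemma sum_sum_eq_two_nsmul_sum_add_sum_sum_erase [DecidableEq ι] [AddCommMonoid R]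
    {f : ι → ι → R} (hf : ∀ i j, f i j = f j i) (u : ι) (hu : f u u = 0) :
    ∑ i, ∑ j, f i j = 2 • ∑ j, f u j + ∑ i ∈ univ.erase u, ∑ j ∈ univ.erase u, f i j := by
  have hrow : ∀ i, ∑ j, f i j = f i u + ∑ j ∈ univ.erase u, f i j := fun i =>
    (Finset.add_sum_erase _ _ (mem_univ u)).symm
  have hcol : ∑ i ∈ univ.erase u, f i u = ∑ j, f u j := by
    rw [Finset.sum_erase univ (f := fun i => f i u) hu]
    exact Finset.sum_congr rfl fun i _ => hf i u
  rw [← Finset.add_sum_erase _ _ (mem_univ u), Finset.sum_congr rfl fun i _ => hrow i,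
    Finset.sum_add_distrib, hcol, two_nsmul, add_assoc]

end Fintype

namespace Matrix

variable {n : Type*} [Fintype n] [DecidableEq n]

lemma IsSymm.dotProduct_diagonal_sum_sub_mulVec {M : Matrix n n ℝ} (hM : M.IsSymm)
    (x : n → ℝ) :
    x ⬝ᵥ (diagonal (fun i => ∑ j, M i j) - M) *ᵥ x = (∑ i, ∑ j, M i j * (x i - x j) ^ 2) / 2 := by
  have hswap : ∑ i, ∑ j, M i j * x j ^ 2 = ∑ i, ∑ j, M i j * x i ^ 2 := by
    rw [Finset.sum_comm]
    exact Finset.sum_congr rfl fun i _ => Finset.sum_congr rfl fun j _ => by rw [hM.apply]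
  have hexp : ∑ i, ∑ j, M i j * (x i - x j) ^ 2 = ∑ i, ∑ j, M i j * x i ^ 2
      + ∑ i, ∑ j, M i j * x j ^ 2 - 2 * ∑ i, ∑ j, x i * M i j * x j := by
    simp only [← Finset.sum_add_distrib, ← Finset.sum_sub_distrib, Finset.mul_sum]
    exact Finset.sum_congr rfl fun i _ => Finset.sum_congr rfl fun j _ => by ring
  have hdiag : x ⬝ᵥ diagonal (fun i => ∑ j, M i j) *ᵥ x = ∑ i, ∑ j, M i j * x i ^ 2 := by
    simp only [dotProduct, mulVec_diagonal, Finset.sum_mul, Finset.mul_sum]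
    exact Finset.sum_congr rfl fun i _ => Finset.sum_congr rfl fun j _ => by ring
  have hoff : x ⬝ᵥ M *ᵥ x = ∑ i, ∑ j, x i * M i j * x j := by
    simp only [dotProduct, mulVec, Finset.mul_sum]
    exact Finset.sum_congr rfl fun i _ => Finset.sum_congr rfl fun j _ => by ring
  rw [hexp, hswap, sub_mulVec, dotProduct_sub, hdiag, hoff]
  ring

namespace IsHermitian

variable {A : Matrix n n ℝ}

lemma dotProduct_mulVec_le_of_eigenvalues_le (hA : A.IsHermitian) {M : ℝ}
    (hM : ∀ i, hA.eigenvalues i ≤ M) (x : n → ℝ) : x ⬝ᵥ A *ᵥ x ≤ M * (x ⬝ᵥ x) := by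
  obtain ⟨U, hU, hAU⟩ : ∃ U : Matrix n n ℝ, U * Uᴴ = 1 ∧ A = U * diagonal hA.eigenvalues * Uᴴ :=
    ⟨_, mem_unitaryGroup_iff.mp hA.eigenvectorUnitary.2,
      by simpa [star_eq_conjTranspose] using hA.spectral_theorem⟩
  have hgap : M • 1 - A = U * diagonal (fun i => M - hA.eigenvalues i) * Uᴴ := by
    rw [show diagonal (fun i => M - hA.eigenvalues i) = M • 1 - diagonal hA.eigenvalues by
      rw [smul_one_eq_diagonal, diagonal_sub], Matrix.mul_sub, Matrix.sub_mul, Matrix.mul_smul,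
      Matrix.smul_mul, Matrix.mul_one, hU, ← hAU]
  have hpsd : (M • 1 - A).PosSemidef := hgap ▸
    (PosSemidef.diagonal fun i => sub_nonneg.mpr (hM i)).mul_mul_conjTranspose_same U
  have := hpsd.dotProduct_mulVec_nonneg x
  simp only [star_trivial, sub_mulVec, smul_mulVec, one_mulVec, dotProduct_sub, dotProduct_smul,
    smul_eq_mul] at this
  linarith

lemma isEigOf_eigenvalues (hA : A.IsHermitian) (i : n) : IsEigOf A (hA.eigenvalues i) :=
  ⟨hA.eigenvectorBasis i,
    fun h => hA.eigenvectorBasis.orthonormal.ne_zero i (by ext j; exact congrFun h j),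
    hA.mulVec_eigenvectorBasis i⟩

lemma dotProduct_mulVec_le_maxEig [Nonempty n] (hA : A.IsHermitian) (x : n → ℝ) :
    x ⬝ᵥ A *ᵥ x ≤ maxEig A * (x ⬝ᵥ x) := by
  obtain ⟨i, -, hi⟩ := Finset.exists_max_image univ hA.eigenvalues univ_nonempty
  have hle := hA.dotProduct_mulVec_le_of_eigenvalues_le fun j => hi j (mem_univ j)
  have hbdd : BddAbove {μ | IsEigOf A μ} := by
    refine ⟨hA.eigenvalues i, fun μ ⟨v, hv, hAv⟩ => ?_⟩
    have := hle v
    rw [hAv, dotProduct_smul, smul_eq_mul] at this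
    exact le_of_mul_le_mul_right this (dotProduct_self_pos hv)
  have hmax : hA.eigenvalues i ≤ maxEig A := le_csSup hbdd (hA.isEigOf_eigenvalues i)
  nlinarith [hle x, dotProduct_self_nonneg x]

end IsHermitian

end Matrix

namespace SimpleGraph

variable {W : Type*} {G : SimpleGraph W}

lemma Reachable.exists_adj_dist_lt {u v : W} (h : G.Reachable u v) (hne : u ≠ v) :
    ∃ c, G.Adj u c ∧ G.dist c v < G.dist u v := by
  obtain ⟨p, hp⟩ := h.exists_walk_length_eq_dist
  cases p with
  | nil => exact absurd rfl hne
  | cons hadj q =>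
    refine ⟨_, hadj, ?_⟩
    rw [← hp, Walk.length_cons]
    exact Nat.lt_succ_of_le (dist_le q)

lemma Connected.exists_three_le_dist_or_exists_dist_eq_two (hG : G.Connected) (hd : 3 ≤ G.diam)
    (u : W) :
    (∃ z, 3 ≤ G.dist u z) ∨ ∃ b c, G.dist u b = 2 ∧ G.Adj u c ∧ 2 ≤ G.dist b c := by
  refine or_iff_not_imp_left.mpr fun hfar => ?_
  simp only [not_exists, not_le] at hfar
  have : Nonempty W := hG.nonempty
  obtain ⟨a, b, hab⟩ := G.exists_dist_eq_diam
  have h3 : 3 ≤ G.dist a b := hab ▸ hd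
  have hua : G.dist a u = G.dist u a := dist_comm
  have hau : G.dist a b ≤ G.dist a u + G.dist u b := hG.dist_triangle
  wlog hb : G.dist u b = 2 generalizing a b
  · have hba : G.dist b a = G.dist a b := dist_comm
    have hub : G.dist b u = G.dist u b := dist_comm
    have ha2 := hfar a
    have hb2 := hfar b
    exact this b a (hba ▸ hab) (by omega) hub (by omega) (by omega)
  have hne : u ≠ a := by rintro rfl; omega
  obtain ⟨c, huc, hca⟩ := (hG.preconnected u a).exists_adj_dist_lt hne
  refine ⟨b, c, hb, huc, ?_⟩
  have ha2 := hfar a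
  have hac : G.dist a c = G.dist c a := dist_comm
  have hcb : G.dist c b = G.dist b c := dist_comm
  have : G.dist a b ≤ G.dist a c + G.dist c b := hG.dist_triangle
  omega

end SimpleGraph

omit [Fintype V] [DecidableEq V] in
lemma distMatrix_isSymm (G : SimpleGraph V) : (distMatrix G).IsSymm :=
  IsSymm.ext fun _ _ => congrArg Nat.cast dist_comm

lemma distLaplacian_isHermitian (G : SimpleGraph V) : (distLaplacian G).IsHermitian := by
  rw [IsHermitian, conjTranspose_eq_transpose_of_trivial, distLaplacian, transpose_sub,
    diagonal_transpose, (distMatrix_isSymm G).eq]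

lemma distLaplacian_eq_diagonal_sum_sub (G : SimpleGraph V) :
    distLaplacian G = diagonal (fun i => ∑ j, distMatrix G i j) - distMatrix G :=
  rfl

/-- Truncated subtraction makes `excessDist G u u = 0`. -/
noncomputable def excessDist (G : SimpleGraph V) (u v : V) : ℕ := G.dist u v - 1

noncomputable def testVec (G : SimpleGraph V) (u v : V) : ℝ :=
  if v = u then ∑ j, (excessDist G u j : ℝ) else -(excessDist G u v : ℝ)

noncomputable def rayleighExcess (G : SimpleGraph V) (u : V) : ℝ :=
  ∑ j, (∑ k, (excessDist G u k : ℝ) + excessDist G u j) * excessDist G u j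
      * (excessDist G u j - 1)
    + (∑ i ∈ univ.erase u, ∑ j ∈ univ.erase u,
        ((G.dist i j : ℝ) - 1) * ((excessDist G u i : ℝ) - excessDist G u j) ^ 2) / 2

section

variable {G : SimpleGraph V}

omit [Fintype V] [DecidableEq V] in
lemma excessDist_self (u : V) : excessDist G u u = 0 := by
  simp [excessDist]

omit [Fintype V] [DecidableEq V] in
lemma cast_excessDist_of_ne (hG : G.Connected) {u v : V} (hv : v ≠ u) :
    (excessDist G u v : ℝ) = G.dist u v - 1 := by
  rw [excessDist, Nat.cast_sub (hG.pos_dist_of_ne hv.symm), Nat.cast_one]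

lemma sum_erase_excessDist (u : V) {f : ℕ → ℝ} (hf : f 0 = 0) :
    ∑ j ∈ univ.erase u, f (excessDist G u j) = ∑ j, f (excessDist G u j) :=
  sum_erase univ (by rw [excessDist_self, hf])

lemma transmission_add_one (hG : G.Connected) (u : V) :
    transmission G u + 1 = Fintype.card V + ∑ j, (excessDist G u j : ℝ) := by
  have hdist : transmission G u = ∑ j ∈ univ.erase u, (G.dist u j : ℝ) :=
    (sum_erase univ (by simp)).symm
  have hexc : ∑ j, (excessDist G u j : ℝ) = ∑ j ∈ univ.erase u, ((G.dist u j : ℝ) - 1) := by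
    rw [← sum_erase_excessDist u Nat.cast_zero]
    exact sum_congr rfl fun j hj => cast_excessDist_of_ne hG (ne_of_mem_erase hj)
  have : Nonempty V := hG.nonempty
  rw [hdist, hexc, sum_sub_distrib, sum_const, card_erase_of_mem (mem_univ u), card_univ,
    nsmul_one, Nat.cast_sub Fintype.card_pos, Nat.cast_one]
  ring

lemma testVec_of_ne {u v : V} (hv : v ≠ u) : testVec G u v = -(excessDist G u v : ℝ) :=
  if_neg hv

lemma sum_testVec (u : V) : ∑ v, testVec G u v = 0 := by
  rw [← add_sum_erase _ _ (mem_univ u),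
    sum_congr rfl fun v hv => testVec_of_ne (ne_of_mem_erase hv), sum_neg_distrib,
    sum_erase_excessDist u Nat.cast_zero, testVec, if_pos rfl, add_neg_cancel]

lemma testVec_dotProduct_self (u : V) :
    testVec G u ⬝ᵥ testVec G u
      = (∑ j, (excessDist G u j : ℝ)) ^ 2 + ∑ j, (excessDist G u j : ℝ) ^ 2 := by
  rw [dotProduct, ← add_sum_erase _ _ (mem_univ u),
    ← sum_erase_excessDist u (f := fun k => (k : ℝ) ^ 2) (by simp), testVec, if_pos rfl, sq]
  congr 1
  exact sum_congr rfl fun v hv => by rw [testVec_of_ne (ne_of_mem_erase hv)]; ring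

lemma sum_sum_excess_testVec (hG : G.Connected) (u : V) :
    ∑ i, ∑ j, ((G.dist i j : ℝ) - 1) * (testVec G u i - testVec G u j) ^ 2
      = 2 * ∑ j, (excessDist G u j : ℝ) * (∑ k, (excessDist G u k : ℝ) + excessDist G u j) ^ 2
        + ∑ i ∈ univ.erase u, ∑ j ∈ univ.erase u,
            ((G.dist i j : ℝ) - 1) * ((excessDist G u i : ℝ) - excessDist G u j) ^ 2 := by
  have hrow : ∀ j, ((G.dist u j : ℝ) - 1) * (testVec G u u - testVec G u j) ^ 2
      = excessDist G u j * (∑ k, (excessDist G u k : ℝ) + excessDist G u j) ^ 2 := by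
    intro j
    rcases eq_or_ne j u with rfl | hj
    · simp [excessDist_self]
    · rw [← cast_excessDist_of_ne hG hj, testVec_of_ne hj, testVec, if_pos rfl, sub_neg_eq_add]
  have hrest : ∀ i ∈ univ.erase u, ∀ j ∈ univ.erase u,
      ((G.dist i j : ℝ) - 1) * (testVec G u i - testVec G u j) ^ 2
        = ((G.dist i j : ℝ) - 1) * ((excessDist G u i : ℝ) - excessDist G u j) ^ 2 := by
    intro i hi j hj
    rw [testVec_of_ne (ne_of_mem_erase hi), testVec_of_ne (ne_of_mem_erase hj)]
    ring
  rw [Fintype.sum_sum_eq_two_nsmul_sum_add_sum_sum_erase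
    (f := fun i j => ((G.dist i j : ℝ) - 1) * (testVec G u i - testVec G u j) ^ 2)
    (fun i j => by rw [dist_comm]; ring) u (by simp), nsmul_eq_mul, Nat.cast_two,
    sum_congr rfl fun j _ => hrow j, sum_congr rfl fun i hi => sum_congr rfl (hrest i hi)]

lemma dotProduct_distLaplacian_testVec_sub (hG : G.Connected) (u : V) :
    testVec G u ⬝ᵥ distLaplacian G *ᵥ testVec G u
        - (transmission G u + 2) * (testVec G u ⬝ᵥ testVec G u) = rayleighExcess G u := by
  set x := testVec G u
  set w : V → ℝ := fun j => excessDist G u j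
  set d := ∑ j, w j
  have hsplit : ∑ i, ∑ j, distMatrix G i j * (x i - x j) ^ 2
      = ∑ i, ∑ j, (x i - x j) ^ 2 + ∑ i, ∑ j, ((G.dist i j : ℝ) - 1) * (x i - x j) ^ 2 := by
    simp only [← sum_add_distrib]
    exact sum_congr rfl fun i _ => sum_congr rfl fun j _ => by rw [distMatrix]; ring
  have hcube : ∑ j, (d + w j) * w j * (w j - 1) + (d + 1) * (d ^ 2 + ∑ j, w j ^ 2)
      = ∑ j, w j * (d + w j) ^ 2 := by
    rw [sq d, mul_sum, ← sum_add_distrib, mul_sum, ← sum_add_distrib]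
    exact sum_congr rfl fun j _ => by ring
  rw [rayleighExcess, distLaplacian_eq_diagonal_sum_sub,
    (distMatrix_isSymm G).dotProduct_diagonal_sum_sub_mulVec, hsplit, Fintype.sum_sum_sub_sq,
    sum_testVec, sum_sum_excess_testVec hG, testVec_dotProduct_self]
  linear_combination -(d ^ 2 + ∑ j, w j ^ 2) * transmission_add_one hG u - hcube

lemma rayleighExcess_pos (hG : G.Connected) (hd : 3 ≤ G.diam) (u : V) :
    0 < rayleighExcess G u := by
  have hterm : ∀ j ∈ univ, 0 ≤ (∑ k, (excessDist G u k : ℝ) + excessDist G u j)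
      * excessDist G u j * (excessDist G u j - 1) := fun j _ => by
    rw [mul_assoc]
    exact mul_nonneg (by positivity) (natCast_mul_natCast_sub_one_nonneg _)
  have hpair : ∀ i ∈ univ.erase u, ∀ j ∈ univ.erase u,
      0 ≤ ((G.dist i j : ℝ) - 1) * ((excessDist G u i : ℝ) - excessDist G u j) ^ 2 := by
    intro i _ j _
    rcases eq_or_ne i j with rfl | hij
    · simp
    · have : (1 : ℝ) ≤ G.dist i j := Nat.one_le_cast.mpr (hG.pos_dist_of_ne hij)
      exact mul_nonneg (by linarith) (sq_nonneg _)
  have hrows := sum_nonneg hterm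
  have hpairs := sum_nonneg fun i hi => sum_nonneg (hpair i hi)
  rw [rayleighExcess]
  rcases hG.exists_three_le_dist_or_exists_dist_eq_two hd u with ⟨z, hz⟩ | ⟨b, c, hb, hc, hbc⟩
  · have hwz : (2 : ℝ) ≤ excessDist G u z := by
      rw [excessDist]; exact_mod_cast Nat.le_sub_one_of_lt hz
    have hwz' : (0 : ℝ) < excessDist G u z - 1 := by linarith
    have := sum_pos' hterm ⟨z, mem_univ z, by positivity⟩
    linarith
  · have hbu : b ∈ univ.erase u := mem_erase.mpr ⟨by rintro rfl; simp at hb, mem_univ b⟩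
    have hcu : c ∈ univ.erase u := mem_erase.mpr ⟨hc.ne.symm, mem_univ c⟩
    have hwb : (excessDist G u b : ℝ) = 1 := by simp [excessDist, hb]
    have hwc : (excessDist G u c : ℝ) = 0 := by simp [excessDist, dist_eq_one_iff_adj.mpr hc]
    have hbc' : (2 : ℝ) ≤ G.dist b c := by exact_mod_cast hbc
    have := sum_pos' (fun i hi => sum_nonneg (hpair i hi)) ⟨b, hbu, sum_pos' (hpair b hbu)
      ⟨c, hcu, by rw [hwb, hwc, sub_zero, one_pow, mul_one]; linarith⟩⟩
    linarith

end

/-- For a connected graph of diameter at least `3` with maximum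
transmission `D₁`, the distance Laplacian spectral radius is strictly greater
than `D₁ + 2`. -/
theorem stmt8 (G : SimpleGraph V) (hG : G.Connected) (hd : 3 ≤ G.diam) (D1 : ℝ)
    (hD1 : IsGreatest (Set.range (transmission G)) D1) :
    D1 + 2 < maxEig (distLaplacian G) := by
  obtain ⟨u, rfl⟩ := hD1.1
  have : Nonempty V := hG.nonempty
  have hgap : (transmission G u + 2) * (testVec G u ⬝ᵥ testVec G u)
      < testVec G u ⬝ᵥ distLaplacian G *ᵥ testVec G u :=
    sub_pos.mp (dotProduct_distLaplacian_testVec_sub hG u ▸ rayleighExcess_pos hG hd u)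
  have hmax := (distLaplacian_isHermitian G).dotProduct_mulVec_le_maxEig (testVec G u)
  exact lt_of_mul_lt_mul_right (hgap.trans_le hmax) (dotProduct_self_nonneg _)
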